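/- In the polynomial ring 𝔽₃[x₁,…,x₅], let y_i(x) = Σ_{j=1}^{5} 𝓡_{ij} x_j (entries of 𝓡 reduced mod 3), and set c = x₅² + 2x₄² + 2x₂x₄ + x₁x₄ + x₃² + x₂x₃ + 2x₁x₃. Then for every homogeneous polynomial P(X,Y) of degree 2 in 𝔽₃[X,Y], the polynomial c − Σ_{i=1}^{5} (−1)^{i−1} P(x_i, y_i(x)) is nonzero in 𝔽₃[x₁,…,x₅]. (Hence the hexagon 4-cocycle e²+2d²+2bd+ad+c²+bc+2ac is cohomologically nontrivial, so H⁴_{3,2} ≠ 0.) -/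

import Mathlib

/-!
The cocycle is detected by evaluation at the point `x = (0, 1, 0, 0, 1)` of `𝔽₃⁵`. There
`y(x) = (2, 1, 0, 2, 1)`, so the five pairs `(xᵢ, yᵢ)` are `(0,2), (1,1), (0,0), (0,2), (1,1)`:
in the alternating sum the repeated pairs cancel and every coboundary takes the value
`P(0,0) = 0`, whereas `c` takes the value `1`.
-/

open MvPolynomial

def Rmat : Matrix (Fin 5) (Fin 5) ℤ :=
  !![0, -2, 1, 1, -2;
     0, -1, 0, 1, -1;
     -1, 2, -2, 0, 1;
     -1, 3, -2, -1, 2;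
     0, 1, -1, 0, 0]

noncomputable def yPoly (p : ℕ) (i : Fin 5) : MvPolynomial (Fin 5) (ZMod p) :=
  ∑ j : Fin 5, C ((Rmat i j : ℤ) : ZMod p) * X j

noncomputable def coc : MvPolynomial (Fin 5) (ZMod 3) :=
  X 4 ^ 2 + 2 * X 3 ^ 2 + 2 * X 1 * X 3 + X 0 * X 3 + X 2 ^ 2 + X 1 * X 2 + 2 * X 0 * X 2

theorem MvPolynomial.IsHomogeneous.eval_zero_eq_zero {σ R : Type*} [CommSemiring R]
    {P : MvPolynomial σ R} {n : ℕ} (hP : P.IsHomogeneous n) (hn : n ≠ 0) : eval 0 P = 0 := by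
  rw [eval_zero, constantCoeff_eq]
  exact hP.coeff_eq_zero (by simpa using hn.symm)

theorem MvPolynomial.eval_aeval {σ τ R : Type*} [CommSemiring R] (v : τ → R)
    (g : σ → MvPolynomial τ R) (P : MvPolynomial σ R) :
    eval v (aeval g P) = eval (fun j => eval v (g j)) P := by
  rw [← aeval_eq_eval, ← aeval_eq_eval, aeval_eq_bind₁, aeval_bind₁]

noncomputable def hexCoboundary (p : ℕ) (P : MvPolynomial (Fin 2) (ZMod p)) :
    MvPolynomial (Fin 5) (ZMod p) :=
  ∑ i : Fin 5, (-1 : MvPolynomial (Fin 5) (ZMod p)) ^ (i : ℕ) * aeval ![X i, yPoly p i] P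

theorem eval_hexCoboundary (p : ℕ) (P : MvPolynomial (Fin 2) (ZMod p)) (v : Fin 5 → ZMod p) :
    eval v (hexCoboundary p P) =
      ∑ i : Fin 5, (-1 : ZMod p) ^ (i : ℕ) * eval ![v i, eval v (yPoly p i)] P := by
  simp only [hexCoboundary, map_sum, map_mul, map_pow, map_neg, map_one, eval_aeval]
  refine Finset.sum_congr rfl fun i _ => ?_
  congr 3
  ext j
  fin_cases j <;> simp

def testPoint : Fin 5 → ZMod 3 := ![0, 1, 0, 0, 1]

theorem eval_yPoly_testPoint (i : Fin 5) :
    eval testPoint (yPoly 3 i) = ![2, 1, 0, 2, 1] i := by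
  fin_cases i <;> simp [yPoly, Rmat, testPoint, Fin.sum_univ_five] <;> decide

theorem eval_hexCoboundary_testPoint (P : MvPolynomial (Fin 2) (ZMod 3)) :
    eval testPoint (hexCoboundary 3 P) = eval 0 P := by
  have h00 : (![0, 0] : Fin 2 → ZMod 3) = 0 := by ext j; fin_cases j <;> rfl
  calc eval testPoint (hexCoboundary 3 P)
      = eval ![0, 2] P - eval ![1, 1] P + eval ![0, 0] P - eval ![0, 2] P + eval ![1, 1] P := by
        simp only [eval_hexCoboundary, Fin.sum_univ_five, eval_yPoly_testPoint]
        simp [testPoint, sub_eq_add_neg, pow_succ]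
    _ = eval 0 P := by rw [h00]; ring

theorem eval_coc_testPoint : eval testPoint coc = 1 := by
  simp [coc, testPoint]

/-- in 𝔽₃[x₁,…,x₅], for every homogeneous polynomial P(X,Y) of degree 2, the
polynomial c − Σ_{i=1}^{5} (−1)^{i−1} P(x_i, y_i(x)) is nonzero; hence the hexagon 4-cocycle
e²+2d²+2bd+ad+c²+bc+2ac is cohomologically nontrivial and H⁴_{3,2} ≠ 0. -/
theorem statement19 (P : MvPolynomial (Fin 2) (ZMod 3)) (hP : P.IsHomogeneous 2) :
    coc - ∑ i : Fin 5,
        (-1 : MvPolynomial (Fin 5) (ZMod 3)) ^ (i : ℕ) * aeval ![X i, yPoly 3 i] P ≠ 0 := by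
  change coc - hexCoboundary 3 P ≠ 0
  intro h
  have := congrArg (eval testPoint) h
  rw [map_sub, eval_coc_testPoint, eval_hexCoboundary_testPoint,
    hP.eval_zero_eq_zero two_ne_zero, sub_zero, map_zero] at this
  exact one_ne_zero this
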